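/- Let S ⊆ Z_n and ε > 0 with ε ≤ 1. If Σ_{k ∈ Z_n} (|S ∩ (J+k)| - |S||J|/n)² < ε n³ for every interval J ⊆ Z_n, then D_J(S) < 2 ε^{1/3} n for every interval J ⊆ Z_n. -/

import Mathlib

/-! Fix an interval `J` and put `g k = |S ∩ (J + k)| - |S| |J| / n`. Since `J + (k + 1)` and
`J + k` are both contained in an interval one longer than `J`, which exceeds each of them by a
single point, `g` changes by at most one from `k` to `k + 1`. Hence `|g k| ≥ D_J(S) - k`, and
summing the squares of this ramp gives `∑ₖ g k ^ 2 ≥ D_J(S) ^ 3 / 3`, so the hypothesis forces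
`D_J(S) ^ 3 < 3 ε n ^ 3 < (2 ε ^ (1/3) n) ^ 3`. -/

/-- Discrepancy of `S` in `J` inside `ZMod n`. -/
noncomputable def disc (n : ℕ) (S J : Finset (ZMod n)) : ℝ :=
  |((S ∩ J).card : ℝ) - (S.card : ℝ) * (J.card : ℝ) / n|

/-- An interval of `ZMod n` is the projection of an interval of `ℤ`. -/
def IsInterval (n : ℕ) (J : Finset (ZMod n)) : Prop :=
  ∃ (a : ℤ) (len : ℕ), J = (Finset.range len).image (fun (i : ℕ) => ((a + (i : ℤ)) : ZMod n))

open Finset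

section OneLipschitzSequence

variable {f : ℕ → ℝ}

lemma abs_sub_zero_le_of_abs_succ_sub_le (hf : ∀ v, |f (v + 1) - f v| ≤ 1) (v : ℕ) :
    |f v - f 0| ≤ v := by
  have hsteps := dist_le_range_sum_dist f v
  simp only [Real.dist_eq] at hsteps
  calc |f v - f 0| = |f 0 - f v| := abs_sub_comm _ _
    _ ≤ ∑ i ∈ range v, |f i - f (i + 1)| := hsteps
    _ ≤ ∑ i ∈ range v, (1 : ℝ) := sum_le_sum fun i _ => (abs_sub_comm _ _).trans_le (hf i)
    _ = v := by simp

lemma pow_three_sub_pow_three_le {x y : ℝ} (hy : 0 ≤ y) (hyx : y ≤ x) (hxy : x ≤ y + 1) :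
    x ^ 3 - y ^ 3 ≤ 3 * x ^ 2 :=
  calc x ^ 3 - y ^ 3 = (x - y) * (x ^ 2 + x * y + y ^ 2) := by ring
    _ ≤ 1 * (3 * x ^ 2) :=
      mul_le_mul (by linarith) (by nlinarith [mul_le_mul hyx hyx hy (hy.trans hyx)])
        (by nlinarith [mul_nonneg hy (hy.trans hyx)]) zero_le_one
    _ = 3 * x ^ 2 := one_mul _

/-- `f` stays above the ramp `r v = max (|f 0| - v) 0`, and the sum of the squares of the ramp is
at least `|f 0| ^ 3 / 3` by telescoping `r v ^ 3 - r (v + 1) ^ 3 ≤ 3 * r v ^ 2`. -/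
lemma pow_three_abs_le_three_mul_sum_sq (hf : ∀ v, |f (v + 1) - f v| ≤ 1) {N : ℕ}
    (hN : |f 0| ≤ N) : |f 0| ^ 3 ≤ 3 * ∑ v ∈ range N, f v ^ 2 := by
  set r : ℕ → ℝ := fun v => max (|f 0| - v) 0 with hr
  have hr_le : ∀ v, r v ≤ |f v| := fun v => max_le (by
      linarith [abs_sub_abs_le_abs_sub (f 0) (f v), abs_sub_comm (f 0) (f v),
        abs_sub_zero_le_of_abs_succ_sub_le hf v]) (abs_nonneg _)
  have hstep : ∀ v, r v ^ 3 - r (v + 1) ^ 3 ≤ 3 * f v ^ 2 := fun v => by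
    have hdrop : r v ≤ r (v + 1) + 1 := by
      simp only [hr]
      refine max_le ?_ (by positivity)
      have := le_max_left (|f 0| - (v + 1 : ℕ)) 0
      push_cast at this ⊢
      linarith
    have hmono : r (v + 1) ≤ r v := max_le_max (by push_cast; linarith) le_rfl
    calc r v ^ 3 - r (v + 1) ^ 3 ≤ 3 * r v ^ 2 :=
          pow_three_sub_pow_three_le (le_max_right _ _) hmono hdrop
      _ ≤ 3 * f v ^ 2 := by
          rw [← sq_abs (f v)]
          gcongr
          exact hr_le v
  calc |f 0| ^ 3 = r 0 ^ 3 - r N ^ 3 := by simp [hr, hN]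
    _ = ∑ v ∈ range N, (r v ^ 3 - r (v + 1) ^ 3) := (sum_range_sub' (fun v => r v ^ 3) N).symm
    _ ≤ ∑ v ∈ range N, 3 * f v ^ 2 := sum_le_sum fun v _ => hstep v
    _ = 3 * ∑ v ∈ range N, f v ^ 2 := (mul_sum _ _ _).symm

end OneLipschitzSequence

lemma Finset.card_inter_le_card_inter_add_one {α : Type*} [DecidableEq α] {S A B : Finset α}
    {x : α} (h : B ⊆ insert x A) : #(S ∩ B) ≤ #(S ∩ A) + 1 :=
  calc #(S ∩ B) ≤ #(insert x (S ∩ A)) := card_le_card fun y hy => by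
        have := h (mem_inter.1 hy).2
        simp only [mem_insert, mem_inter] at hy this ⊢
        tauto
    _ ≤ #(S ∩ A) + 1 := card_insert_le _ _

lemma Finset.image_add_add_right {G : Type*} [AddSemigroup G] [DecidableEq G] (J : Finset G)
    (a b : G) : J.image (· + (a + b)) = (J.image (· + a)).image (· + b) := by
  simp only [image_image, Function.comp_def, add_assoc]

def zmodInterval (n : ℕ) (a : ℤ) (len : ℕ) : Finset (ZMod n) :=
  (range len).image fun i : ℕ => ((a + (i : ℤ)) : ZMod n)

section zmodInterval

variable {n : ℕ}

lemma zmodInterval_image_add (a b : ℤ) (len : ℕ) :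
    (zmodInterval n a len).image (· + (b : ZMod n)) = zmodInterval n (a + b) len := by
  rw [zmodInterval, zmodInterval, image_image]
  refine image_congr fun i _ => ?_
  simp only [Function.comp_apply, Int.cast_add, Int.cast_natCast]
  ring

lemma zmodInterval_succ_right (a : ℤ) (len : ℕ) :
    zmodInterval n a (len + 1) = insert ((a : ZMod n) + len) (zmodInterval n a len) := by
  simp only [zmodInterval, range_add_one, image_insert, Int.cast_natCast]

lemma zmodInterval_succ_left (a : ℤ) (len : ℕ) :
    zmodInterval n a (len + 1) = insert (a : ZMod n) (zmodInterval n (a + 1) len) := by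
  induction len with
  | zero => simp [zmodInterval]
  | succ len ih =>
    rw [zmodInterval_succ_right, ih, insert_comm, zmodInterval_succ_right]
    push_cast
    ring_nf

lemma zmodInterval_subset_succ (a : ℤ) (len : ℕ) :
    zmodInterval n a len ⊆ zmodInterval n a (len + 1) :=
  image_subset_image (range_subset_range.2 len.le_succ)

lemma abs_card_inter_zmodInterval_succ_sub_le (S : Finset (ZMod n)) (a : ℤ) (len : ℕ) :
    |(#(S ∩ zmodInterval n (a + 1) len) : ℝ) - #(S ∩ zmodInterval n a len)| ≤ 1 := by
  have h₁ := card_inter_le_card_inter_add_one (S := S) (zmodInterval_succ_right a len).le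
  have h₂ := card_inter_le_card_inter_add_one (S := S) (zmodInterval_succ_left a len).le
  have h₃ := card_le_card (inter_subset_inter_left (s := S) (zmodInterval_subset_succ a len))
  have h₄ := card_le_card (inter_subset_inter_left (s := S)
    ((zmodInterval_succ_left (n := n) a len).symm ▸ subset_insert _ _))
  rw [abs_sub_le_iff]
  constructor <;> (rw [sub_le_iff_le_add']; norm_cast; omega)

end zmodInterval

lemma ZMod.sum_range_natCast {n : ℕ} [NeZero n] {M : Type*} [AddCommMonoid M]
    (g : ZMod n → M) : ∑ v ∈ range n, g v = ∑ k, g k :=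
  sum_nbij' (↑) ZMod.val (by simp) (fun k _ => mem_range.2 (ZMod.val_lt k))
    (fun _ hv => ZMod.val_cast_of_lt (mem_range.1 hv)) (fun k _ => ZMod.natCast_zmod_val k)
    (fun _ _ => rfl)

lemma disc_le (n : ℕ) [NeZero n] (S J : Finset (ZMod n)) : disc n S J ≤ n := by
  have hcard : ∀ T : Finset (ZMod n), (#T : ℝ) ≤ n := fun T => by
    exact_mod_cast (card_le_univ T).trans_eq (ZMod.card n)
  refine abs_sub_le_of_nonneg_of_le (by positivity) (hcard _) (by positivity) ?_
  rw [div_le_iff₀ (by exact_mod_cast Nat.pos_of_neZero n)]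
  exact mul_le_mul (hcard S) (hcard J) (by positivity) (by positivity)

lemma lt_two_mul_rpow_one_third_mul {d ε N : ℝ} (hε : 0 ≤ ε) (hN : 0 ≤ N)
    (h : d ^ 3 < 8 * ε * N ^ 3) : d < 2 * ε ^ ((1 : ℝ) / 3) * N := by
  have hroot : (ε ^ ((1 : ℝ) / 3)) ^ 3 = ε := by
    rw [one_div]
    exact_mod_cast Real.rpow_inv_natCast_pow hε three_ne_zero
  refine lt_of_pow_lt_pow_left₀ 3 (by positivity) ?_
  rw [mul_pow, mul_pow, hroot]
  linarith

namespace IsInterval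

variable {n : ℕ} {J : Finset (ZMod n)}

lemma image_add (hJ : IsInterval n J) (k : ZMod n) : IsInterval n (J.image (· + k)) := by
  obtain ⟨a, len, rfl⟩ := hJ
  have h := zmodInterval_image_add (n := n) a (k.cast : ℤ) len
  rw [ZMod.intCast_zmod_cast] at h
  exact ⟨_, _, h⟩

lemma abs_card_inter_image_add_one_sub_le (hJ : IsInterval n J) (S : Finset (ZMod n)) :
    |(#(S ∩ J.image (· + 1)) : ℝ) - #(S ∩ J)| ≤ 1 := by
  obtain ⟨a, len, rfl⟩ := hJ
  have hshift := zmodInterval_image_add (n := n) a 1 len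
  rw [Int.cast_one] at hshift
  rw [show (range len).image (fun i : ℕ => ((a + (i : ℤ)) : ZMod n)) = zmodInterval n a len
    from rfl, hshift]
  exact abs_card_inter_zmodInterval_succ_sub_le S a len

end IsInterval

theorem balance_of_translation_general (n : ℕ) [NeZero n] (S : Finset (ZMod n)) (ε : ℝ)
    (hε : 0 < ε)
    (h : ∀ J : Finset (ZMod n), IsInterval n J →
      ∑ k : ZMod n, (((S ∩ J.image (· + k)).card : ℝ) - (S.card : ℝ) * J.card / n) ^ 2
        < ε * (n : ℝ) ^ 3) :
    ∀ J : Finset (ZMod n), IsInterval n J → disc n S J < 2 * ε ^ ((1 : ℝ) / 3) * n := by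
  intro J hJ
  set g : ZMod n → ℝ := fun k => #(S ∩ J.image (· + k)) - (S.card : ℝ) * J.card / n with hg
  have hg₀ : |g 0| = disc n S J := by simp only [hg, disc, add_zero, image_id']
  have hg_step : ∀ v : ℕ, |g ↑(v + 1) - g ↑v| ≤ 1 := fun v => by
    simp only [hg, Nat.cast_succ, image_add_add_right, sub_sub_sub_cancel_right]
    exact (hJ.image_add v).abs_card_inter_image_add_one_sub_le S
  have hcube : disc n S J ^ 3 < 3 * ε * n ^ 3 :=
    calc disc n S J ^ 3 = |g (0 : ℕ)| ^ 3 := by rw [Nat.cast_zero, hg₀]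
      _ ≤ 3 * ∑ v ∈ range n, g v ^ 2 :=
        pow_three_abs_le_three_mul_sum_sq (f := fun v : ℕ => g v) hg_step
          (by simpa [hg₀] using disc_le n S J)
      _ = 3 * ∑ k, g k ^ 2 := by rw [ZMod.sum_range_natCast (fun k => g k ^ 2)]
      _ < 3 * (ε * n ^ 3) := by gcongr; exact h J hJ
      _ = 3 * ε * n ^ 3 := by ring
  exact lt_two_mul_rpow_one_third_mul hε.le (by positivity)
    (hcube.trans_le (by gcongr; norm_num))

theorem balance_of_translation (n : ℕ) [NeZero n] (S : Finset (ZMod n)) (ε : ℝ)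
    (hε : 0 < ε) (hε1 : ε ≤ 1)
    (h : ∀ J : Finset (ZMod n), IsInterval n J →
      ∑ k : ZMod n, (((S ∩ J.image (· + k)).card : ℝ) - (S.card : ℝ) * J.card / n) ^ 2
        < ε * (n : ℝ) ^ 3) :
    ∀ J : Finset (ZMod n), IsInterval n J → disc n S J < 2 * ε ^ ((1 : ℝ) / 3) * n :=
  balance_of_translation_general n S ε hε h
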